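/- The Lie subalgebras a_k(n) of su(2ⁿ) generated by translation-invariant 2-local Pauli interactions (with both factors ≠ I) have trivial center for 1 ≤ k ≤ 22 and n ≥ 3: no nonzero element commutes with the whole subalgebra. -/

import Mathlib

/-!
If `c` is central in `L = lieSpan S`, the functional `y ↦ tr (c * y)` kills every bracket
`⁅a, y⁆` with `a ∈ L`, because `tr (c * y * a) = tr (a * c * y) = tr (c * a * y)`. Each generator
`x = i • P` of `a_k(n)` has a partner `a ∈ L` (a neighbouring or overlapping generator) with
`a * a = -1` and `a * x = -(x * a)`, so `x = -½ ⁅a, a * x⁆` and the functional vanishes on the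
generators, hence on all of `L`. In particular `tr (cᴴ * c) = -tr (c * c) = 0`, so `c = 0`.
Finding the partners is a finite check on the generator lists: at the left end of the chain the
partner acts on the same pair of sites or one site to the right, elsewhere one site to the left.
-/

open Matrix

attribute [local instance 100] LieRing.ofAssociativeRing

noncomputable def pauli : Fin 4 → Matrix (Fin 2) (Fin 2) ℂ :=
  ![1, !![0, 1; 1, 0], !![0, -Complex.I; Complex.I, 0], !![1, 0; 0, -1]]

noncomputable def pauliString {n : ℕ} (s : Fin n → Fin 4) :
    Matrix (Fin n → Fin 2) (Fin n → Fin 2) ℂ :=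
  Matrix.of fun v w => ∏ j, pauli (s j) (v j) (w j)

def PauliStrings (n : ℕ) : Set (Matrix (Fin n → Fin 2) (Fin n → Fin 2) ℂ) :=
  Set.range (pauliString (n := n))

/-- The 2-local Pauli string `A ⊗ B` acting on sites `j, j+1` of an `n`-qubit chain
(with Pauli labels `0 = I`, `1 = X`, `2 = Y`, `3 = Z`). -/
noncomputable def twoLocal (n j : ℕ) (pq : Fin 4 × Fin 4) :
    Matrix (Fin n → Fin 2) (Fin n → Fin 2) ℂ :=
  pauliString (fun t => if (t : ℕ) = j then pq.1 else if (t : ℕ) = j + 1 then pq.2 else 0)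

/-- Generating sets of the subalgebras `a_k ⊆ su(4)`, `1 ≤ k ≤ 22` (labels `1=X,2=Y,3=Z`). -/
def spinGens : ℕ → List (Fin 4 × Fin 4)
  | 1 => [(1,2)]
  | 2 => [(1,2),(2,1)]
  | 3 => [(1,1),(2,3)]
  | 4 => [(1,1),(2,2)]
  | 5 => [(1,2),(2,3)]
  | 6 => [(1,1),(2,3),(3,2)]
  | 7 => [(1,1),(2,2),(3,3)]
  | 8 => [(1,1),(1,3)]
  | 9 => [(1,2),(1,3)]
  | 10 => [(1,2),(2,3),(3,1)]
  | 11 => [(1,2),(2,1),(2,3)]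
  | 12 => [(1,1),(1,2),(2,3)]
  | 13 => [(2,2),(2,3),(1,1)]
  | 14 => [(1,1),(2,2),(1,2)]
  | 15 => [(1,1),(1,2),(1,3)]
  | 16 => [(1,2),(2,1),(2,3),(3,2)]
  | 17 => [(1,1),(1,2),(3,1)]
  | 18 => [(1,1),(1,3),(2,2),(3,2)]
  | 19 => [(1,1),(1,2),(3,1),(2,3)]
  | 20 => [(1,1),(2,2),(3,3),(3,2)]
  | 21 => [(1,1),(2,2),(1,2),(3,1)]
  | 22 => [(1,1),(1,2),(1,3),(2,1)]
  | _ => []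

/-- The dynamical Lie algebra `a_k(n) ⊆ su(2ⁿ)` generated by the translation-invariant
2-local interactions of type `k` on an open chain of length `n`. -/
noncomputable def dla (k n : ℕ) :
    LieSubalgebra ℝ (Matrix (Fin n → Fin 2) (Fin n → Fin 2) ℂ) :=
  LieSubalgebra.lieSpan ℝ (Matrix (Fin n → Fin 2) (Fin n → Fin 2) ℂ)
    {x | ∃ pq ∈ spinGens k, ∃ j, j + 1 < n ∧ x = Complex.I • twoLocal n j pq}

namespace Matrix

variable {ι α R : Type*} [Fintype ι] [CommRing R]

def piKron (M : ι → Matrix α α R) : Matrix (ι → α) (ι → α) R :=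
  of fun v w => ∏ i, M i (v i) (w i)

theorem piKron_mul [DecidableEq ι] [Fintype α] (M N : ι → Matrix α α R) :
    piKron M * piKron N = piKron (M * N) := by
  ext v w
  simp only [piKron, mul_apply, of_apply, Pi.mul_apply]
  rw [Fintype.prod_sum]
  exact Finset.sum_congr rfl fun u _ => Finset.prod_mul_distrib.symm

theorem piKron_one [DecidableEq α] : piKron (1 : ι → Matrix α α R) = 1 := by
  ext v w
  simp only [piKron, of_apply, Pi.one_apply, one_apply, Finset.prod_boole, Finset.mem_univ,
    true_implies, funext_iff]

theorem piKron_eq_neg [DecidableEq ι] {M N : ι → Matrix α α R} (i₀ : ι) (h₀ : M i₀ = -N i₀)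
    (h : ∀ i ≠ i₀, M i = N i) : piKron M = -piKron N := by
  ext v w
  simp only [piKron, of_apply, neg_apply,
    ← Finset.mul_prod_erase _ _ (Finset.mem_univ i₀), h₀, neg_mul, neg_inj]
  congr 1
  exact Finset.prod_congr rfl fun i hi => by rw [h i (Finset.ne_of_mem_erase hi)]

theorem piKron_conjTranspose [StarRing R] (M : ι → Matrix α α R) :
    (piKron M)ᴴ = piKron fun i => (M i)ᴴ := by
  ext v w
  simp only [piKron, conjTranspose_apply, of_apply, star_prod]

end Matrix

def PauliAnticomm (p q : Fin 4) : Prop := p ≠ 0 ∧ q ≠ 0 ∧ p ≠ q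

instance : DecidableRel PauliAnticomm := fun _ _ => inferInstanceAs (Decidable (_ ∧ _ ∧ _))

theorem pauli_mul_self (p : Fin 4) : pauli p * pauli p = 1 := by
  fin_cases p <;> ext i j <;> fin_cases i <;> fin_cases j <;>
    simp [pauli, mul_apply, Fin.sum_univ_two, one_apply]

theorem pauli_conjTranspose (p : Fin 4) : (pauli p)ᴴ = pauli p := by
  fin_cases p <;> ext i j <;> fin_cases i <;> fin_cases j <;>
    simp [pauli, conjTranspose_apply, one_apply]

theorem pauli_mul_comm {p q : Fin 4} (h : ¬PauliAnticomm p q) :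
    pauli p * pauli q = pauli q * pauli p := by
  fin_cases p <;> fin_cases q <;> simp [PauliAnticomm] at h ⊢ <;>
    ext i j <;> fin_cases i <;> fin_cases j <;> simp [pauli, mul_apply, Fin.sum_univ_two]

theorem pauli_mul_anticomm {p q : Fin 4} (h : PauliAnticomm p q) :
    pauli p * pauli q = -(pauli q * pauli p) := by
  fin_cases p <;> fin_cases q <;> simp [PauliAnticomm] at h ⊢ <;>
    ext i j <;> fin_cases i <;> fin_cases j <;> simp [pauli, mul_apply, Fin.sum_univ_two]

theorem pauliString_eq_piKron {n : ℕ} (s : Fin n → Fin 4) :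
    pauliString s = piKron fun i => pauli (s i) := rfl

theorem pauliString_mul_self {n : ℕ} (s : Fin n → Fin 4) :
    pauliString s * pauliString s = 1 := by
  rw [pauliString_eq_piKron, piKron_mul, ← piKron_one]
  exact congrArg piKron (funext fun i => pauli_mul_self (s i))

theorem pauliString_conjTranspose {n : ℕ} (s : Fin n → Fin 4) :
    (pauliString s)ᴴ = pauliString s := by
  simp only [pauliString_eq_piKron, piKron_conjTranspose, pauli_conjTranspose]

theorem pauliString_mul_anticomm {n : ℕ} {s t : Fin n → Fin 4} (i₀ : Fin n)
    (h₀ : PauliAnticomm (s i₀) (t i₀)) (h : ∀ i ≠ i₀, ¬PauliAnticomm (s i) (t i)) :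
    pauliString s * pauliString t = -(pauliString t * pauliString s) := by
  simp only [pauliString_eq_piKron, piKron_mul]
  exact piKron_eq_neg i₀ (pauli_mul_anticomm h₀) fun i hi => pauli_mul_comm (h i hi)

theorem not_pauliAnticomm_zero_left (q : Fin 4) : ¬PauliAnticomm 0 q := fun h => h.1 rfl

theorem not_pauliAnticomm_zero_right (p : Fin 4) : ¬PauliAnticomm p 0 := fun h => h.2.1 rfl

theorem not_pauliAnticomm_self (p : Fin 4) : ¬PauliAnticomm p p := fun h => h.2.2 rfl

theorem twoLocal_mul_self (n j : ℕ) (pq : Fin 4 × Fin 4) :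
    twoLocal n j pq * twoLocal n j pq = 1 :=
  pauliString_mul_self _

theorem twoLocal_conjTranspose (n j : ℕ) (pq : Fin 4 × Fin 4) :
    (twoLocal n j pq)ᴴ = twoLocal n j pq :=
  pauliString_conjTranspose _

theorem twoLocal_mul_twoLocal_succ {n j : ℕ} (hj : j + 1 < n) {a b : Fin 4 × Fin 4}
    (h : PauliAnticomm a.2 b.1) :
    twoLocal n j a * twoLocal n (j + 1) b = -(twoLocal n (j + 1) b * twoLocal n j a) := by
  refine pauliString_mul_anticomm ⟨j + 1, hj⟩ (by simpa using h) fun i hi => ?_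
  have hi : (i : ℕ) ≠ j + 1 := Fin.val_ne_iff.mpr hi
  split_ifs <;> first
    | omega
    | exact not_pauliAnticomm_zero_left _
    | exact not_pauliAnticomm_zero_right _

theorem twoLocal_mul_twoLocal_of_fst_eq {n j : ℕ} (hj : j + 1 < n) {a b : Fin 4 × Fin 4}
    (h₁ : a.1 = b.1) (h₂ : PauliAnticomm a.2 b.2) :
    twoLocal n j a * twoLocal n j b = -(twoLocal n j b * twoLocal n j a) := by
  refine pauliString_mul_anticomm ⟨j + 1, hj⟩ (by simpa using h₂) fun i hi => ?_
  have hi : (i : ℕ) ≠ j + 1 := Fin.val_ne_iff.mpr hi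
  split_ifs
  · exact h₁ ▸ not_pauliAnticomm_self _
  · exact not_pauliAnticomm_self _

theorem spinGens_exists_left_partner {k : ℕ} :
    ∀ a ∈ spinGens k, ∃ b ∈ spinGens k, PauliAnticomm b.2 a.1 := by
  unfold spinGens; split <;> decide

theorem spinGens_exists_right_partner {k : ℕ} :
    ∀ a ∈ spinGens k, ∃ b ∈ spinGens k,
      PauliAnticomm a.2 b.1 ∨ (a.1 = b.1 ∧ PauliAnticomm a.2 b.2) := by
  unfold spinGens; split <;> decide

section LieSpan

open scoped ComplexOrder

variable {m : Type*} [Fintype m] [DecidableEq m]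

theorem trace_mul_lie_eq_zero_of_commute {R : Type*} [CommRing R] {c a : Matrix m m R}
    (h : Commute c a) (y : Matrix m m R) : (c * ⁅a, y⁆).trace = 0 := by
  rw [Ring.lie_def, mul_sub, trace_sub, ← mul_assoc c y a, trace_mul_comm (c * y) a,
    ← mul_assoc a c y, ← h.eq, mul_assoc, sub_self]

theorem trace_mul_eq_zero_of_anticomm {K : Type*} [Field K] [CharZero K] {c a x : Matrix m m K}
    (hca : Commute c a) (ha : a * a = -1) (hax : a * x = -(x * a)) : (c * x).trace = 0 := by
  have hlie : ⁅a, a * x⁆ = (-2 : K) • x := by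
    rw [Ring.lie_def, ← mul_assoc, ha, hax, neg_mul (x * a), mul_assoc, ha]
    simp only [neg_one_mul, mul_neg, mul_one, neg_neg]
    module
  have := trace_mul_lie_eq_zero_of_commute hca (a * x)
  rw [hlie, Matrix.mul_smul, trace_smul, smul_eq_mul, mul_eq_zero] at this
  exact this.resolve_left (by norm_num)

theorem trace_mul_eq_zero_of_mem_lieSpan {R K : Type*} [CommRing R] [CommRing K] [Algebra R K]
    {S : Set (Matrix m m K)} {c : Matrix m m K}
    (hc : ∀ x ∈ LieSubalgebra.lieSpan R (Matrix m m K) S, Commute c x)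
    (hS : ∀ x ∈ S, (c * x).trace = 0) {y : Matrix m m K}
    (hy : y ∈ LieSubalgebra.lieSpan R (Matrix m m K) S) : (c * y).trace = 0 := by
  induction hy using LieSubalgebra.lieSpan_induction with
  | mem x hx => exact hS x hx
  | zero => simp
  | add x y _ _ hx hy => rw [mul_add, trace_add, hx, hy, add_zero]
  | smul r x _ hx => rw [Matrix.mul_smul, trace_smul, hx, smul_zero]
  | lie x y hxL _ _ _ => exact trace_mul_lie_eq_zero_of_commute (hc x hxL) y

theorem conjTranspose_eq_neg_of_mem_lieSpan {S : Set (Matrix m m ℂ)}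
    (hS : ∀ x ∈ S, xᴴ = -x) {y : Matrix m m ℂ}
    (hy : y ∈ LieSubalgebra.lieSpan ℝ (Matrix m m ℂ) S) : yᴴ = -y := by
  induction hy using LieSubalgebra.lieSpan_induction with
  | mem x hx => exact hS x hx
  | zero => simp
  | add x y _ _ hx hy => rw [conjTranspose_add, hx, hy, neg_add]
  | smul r x _ hx => rw [conjTranspose_smul, hx, star_trivial, smul_neg]
  | lie x y _ _ hx hy =>
    rw [Ring.lie_def, conjTranspose_sub, conjTranspose_mul, conjTranspose_mul, hx, hy]
    noncomm_ring

theorem eq_zero_of_commute_lieSpan {S : Set (Matrix m m ℂ)} (hS : ∀ x ∈ S, xᴴ = -x)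
    (hpartner : ∀ x ∈ S, ∃ a ∈ LieSubalgebra.lieSpan ℝ (Matrix m m ℂ) S,
      a * a = -1 ∧ a * x = -(x * a))
    {c : Matrix m m ℂ} (hc : c ∈ LieSubalgebra.lieSpan ℝ (Matrix m m ℂ) S)
    (hcen : ∀ x ∈ LieSubalgebra.lieSpan ℝ (Matrix m m ℂ) S, Commute c x) : c = 0 := by
  have htrace : (c * c).trace = 0 := by
    refine trace_mul_eq_zero_of_mem_lieSpan hcen (fun x hx => ?_) hc
    obtain ⟨a, haL, ha, hax⟩ := hpartner x hx
    exact trace_mul_eq_zero_of_anticomm (hcen a haL) ha hax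
  rw [← trace_conjTranspose_mul_self_eq_zero_iff, conjTranspose_eq_neg_of_mem_lieSpan hS hc,
    neg_mul, trace_neg, htrace, neg_zero]

end LieSpan

theorem exists_anticomm_partner_mem_dla {k n : ℕ} (hn : 3 ≤ n) {pq : Fin 4 × Fin 4}
    (hpq : pq ∈ spinGens k) {j : ℕ} (hj : j + 1 < n) :
    ∃ a ∈ dla k n, a * a = -1 ∧
      a * (Complex.I • twoLocal n j pq) = -((Complex.I • twoLocal n j pq) * a) := by
  suffices ∃ j', j' + 1 < n ∧ ∃ pq' ∈ spinGens k,
      twoLocal n j' pq' * twoLocal n j pq = -(twoLocal n j pq * twoLocal n j' pq') by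
    obtain ⟨j', hj', pq', hpq', hanti⟩ := this
    refine ⟨Complex.I • twoLocal n j' pq', LieSubalgebra.subset_lieSpan ⟨pq', hpq', j', hj', rfl⟩,
      ?_, ?_⟩
    · rw [smul_mul_smul_comm, Complex.I_mul_I, twoLocal_mul_self, neg_one_smul]
    · rw [smul_mul_smul_comm, smul_mul_smul_comm, hanti, smul_neg, mul_comm]
  cases j with
  | zero =>
    obtain ⟨pq', hpq', hright | ⟨hfst, hsnd⟩⟩ := spinGens_exists_right_partner pq hpq
    · exact ⟨1, by omega, pq', hpq',
        neg_eq_iff_eq_neg.mp (twoLocal_mul_twoLocal_succ hj hright).symm⟩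
    · exact ⟨0, hj, pq', hpq',
        neg_eq_iff_eq_neg.mp (twoLocal_mul_twoLocal_of_fst_eq hj hfst hsnd).symm⟩
  | succ j =>
    obtain ⟨pq', hpq', hleft⟩ := spinGens_exists_left_partner pq hpq
    exact ⟨j, by omega, pq', hpq', twoLocal_mul_twoLocal_succ (by omega) hleft⟩

theorem dla_trivial_center_general (k n : ℕ) (hn : 3 ≤ n) :
    ∀ c ∈ dla k n, (∀ x ∈ dla k n, ⁅c, x⁆ = 0) → c = 0 := by
  intro c hc hcen
  refine eq_zero_of_commute_lieSpan ?_ ?_ hc fun x hx => commute_iff_lie_eq.mpr (hcen x hx)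
  · rintro _ ⟨pq, -, j, -, rfl⟩
    rw [conjTranspose_smul, twoLocal_conjTranspose, Complex.star_def, Complex.conj_I, neg_smul]
  · rintro _ ⟨pq, hpq, j, hj, rfl⟩
    exact exists_anticomm_partner_mem_dla hn hpq hj

/-- The dynamical Lie algebras `a_k(n)` have trivial center for `1 ≤ k ≤ 22`, `n ≥ 3`. -/
theorem dla_trivial_center (k n : ℕ) (hk1 : 1 ≤ k) (hk2 : k ≤ 22) (hn : 3 ≤ n) :
    ∀ c ∈ dla k n, (∀ x ∈ dla k n, ⁅c, x⁆ = 0) → c = 0 :=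
  dla_trivial_center_general k n hn
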